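/- arXiv:2106.10937 — 4 statements merged into one kernel-verified Lean document; each statement's English description precedes it below -/
import Mathlib

section
/- Let D be a linear operator on L²(]-1/2,1/2[; ℝᴺ) with H¹₀ ⊆ dom(D) ⊆ H¹ and Du = u' for u ∈ dom(D). Suppose there is a matrix M ∈ ℝ^{N×N} with M*M ≤ 1 (in the sense of positive semidefinite ordering) such that every u ∈ dom(D) satisfies M·u(1/2⁻) + u(-1/2⁺) = 0. Then D is accretive: ⟨Du, u⟩_{L²} ≥ 0 for all u ∈ dom(D). -/
open MeasureTheory Set Matrix

/-- `u ∈ H¹(]a,b[; E)`, encoded via its continuous representative together with its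
(L²) derivative `du` and the fundamental theorem of calculus. -/
def IsH1Rep {E : Type*} [NormedAddCommGroup E] [NormedSpace ℝ E] (a b : ℝ)
    (u du : ℝ → E) : Prop :=
  ContinuousOn u (Set.Icc a b) ∧
  MemLp du 2 (volume.restrict (Set.Ioo a b)) ∧
  ∀ x ∈ Set.Icc a b, u x = u a + ∫ t in Set.Ioo a x, du t

/-! For `u ∈ H¹` one has `∫ ⟪u', u⟫ = (‖u(1/2)‖² - ‖u(-1/2)‖²) / 2`. Writing `u = u(-1/2) + ∫ u'`,
this reduces to `∫ ⟪g x, ∫_{t < x} g t⟫ dx = ‖∫ g‖² / 2`, which holds because the square splits,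
up to its null diagonal, into two triangles that the swap `(x, y) ↦ (y, x)` exchanges while
preserving `⟪g x, g y⟫`. The boundary condition gives `u(-1/2) = -M u(1/2)`, and `MᵀM ≤ 1`
gives `‖M w‖ ≤ ‖w‖`, so the boundary term is nonnegative. -/

open scoped RealInnerProductSpace

lemma ae_prod_fst_ne_snd {μ : Measure ℝ} [SFinite μ] [NullSingletonClass μ] :
    ∀ᵐ p ∂(μ.prod μ), p.1 ≠ p.2 :=
  (Measure.ae_prod_iff_ae_ae (measurableSet_eq_fun measurable_fst measurable_snd).compl).2
    (Filter.Eventually.of_forall fun x => by simpa [eq_comm] using μ.ae_ne x)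

section PrimitiveInner

variable {E : Type*} [NormedAddCommGroup E] [InnerProductSpace ℝ E]

lemma MeasureTheory.Integrable.inner_prod {α β : Type*} [MeasurableSpace α] [MeasurableSpace β]
    {μ : Measure α} {ν : Measure β} [SFinite ν] {f : α → E} {g : β → E}
    (hf : Integrable f μ) (hg : Integrable g ν) :
    Integrable (fun p : α × β => ⟪f p.1, g p.2⟫) (μ.prod ν) :=
  (hf.norm.mul_prod hg.norm).mono' (hf.1.comp_fst.inner hg.1.comp_snd)
    (Filter.Eventually.of_forall fun _ => norm_inner_le_norm _ _)

variable [CompleteSpace E] {μ : Measure ℝ} {g : ℝ → E}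

lemma integral_indicator_lt_inner (hg : Integrable g μ) (x : ℝ) :
    ∫ y, {p : ℝ × ℝ | p.2 < p.1}.indicator (fun p => ⟪g p.1, g p.2⟫) (x, y) ∂μ =
      ⟪g x, ∫ t in Iio x, g t ∂μ⟫ := by
  have : ∀ y, {p : ℝ × ℝ | p.2 < p.1}.indicator (fun p => ⟪g p.1, g p.2⟫) (x, y) =
      (Iio x).indicator (fun y => ⟪g x, g y⟫) y := fun y => by
    simp [indicator_apply]
  simp_rw [this, integral_indicator measurableSet_Iio]
  exact integral_inner hg.integrableOn _

variable [SFinite μ]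

lemma integrable_inner_integral_Iio (hg : Integrable g μ) :
    Integrable (fun x => ⟪g x, ∫ t in Iio x, g t ∂μ⟫) μ := by
  simpa only [integral_indicator_lt_inner hg] using ((hg.inner_prod hg).indicator
    (measurableSet_lt measurable_snd measurable_fst)).integral_prod_left

lemma integral_inner_integral_Iio [NullSingletonClass μ] (hg : Integrable g μ) :
    ∫ x, ⟪g x, ∫ t in Iio x, g t ∂μ⟫ ∂μ = ‖∫ x, g x ∂μ‖ ^ 2 / 2 := by
  have hK := hg.inner_prod hg
  have hm_lower : MeasurableSet {p : ℝ × ℝ | p.2 < p.1} :=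
    measurableSet_lt measurable_snd measurable_fst
  have hm_upper : MeasurableSet {p : ℝ × ℝ | p.1 < p.2} :=
    measurableSet_lt measurable_fst measurable_snd
  set K : ℝ × ℝ → ℝ := fun p => ⟪g p.1, g p.2⟫
  have h_lower : ∫ p, {p : ℝ × ℝ | p.2 < p.1}.indicator K p ∂(μ.prod μ) =
      ∫ x, ⟪g x, ∫ t in Iio x, g t ∂μ⟫ ∂μ := by
    rw [integral_prod _ (hK.indicator hm_lower)]
    exact integral_congr_ae (Filter.Eventually.of_forall (integral_indicator_lt_inner hg))
  have h_upper : ∫ p, {p : ℝ × ℝ | p.1 < p.2}.indicator K p ∂(μ.prod μ) =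
      ∫ p, {p : ℝ × ℝ | p.2 < p.1}.indicator K p ∂(μ.prod μ) := by
    rw [← integral_prod_swap]
    congr 1; ext p
    simp [K, indicator_apply, real_inner_comm]
  have h_full : ∫ p, K p ∂(μ.prod μ) = ‖∫ x, g x ∂μ‖ ^ 2 := by
    rw [integral_prod _ hK, ← real_inner_self_eq_norm_sq, ← integral_inner hg]
    refine integral_congr_ae (Filter.Eventually.of_forall fun x => ?_)
    change ∫ y, ⟪g x, g y⟫ ∂μ = ⟪∫ y, g y ∂μ, g x⟫
    rw [integral_inner hg, real_inner_comm]
  have h_split : K =ᵐ[μ.prod μ]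
      {p : ℝ × ℝ | p.2 < p.1}.indicator K + {p : ℝ × ℝ | p.1 < p.2}.indicator K := by
    filter_upwards [ae_prod_fst_ne_snd] with p hp
    rcases hp.lt_or_gt with h | h <;> simp [h, h.not_gt]
  have := integral_congr_ae h_split
  rw [integral_add' (hK.indicator hm_lower) (hK.indicator hm_upper), h_upper, h_full,
    h_lower] at this
  linarith

lemma IsH1Rep.integral_inner_eq {a b : ℝ} {u du : ℝ → E} (h : IsH1Rep a b u du) (hab : a ≤ b) :
    ∫ x in Ioo a b, ⟪du x, u x⟫ = (‖u b‖ ^ 2 - ‖u a‖ ^ 2) / 2 := by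
  obtain ⟨-, hdu, hftc⟩ := h
  have : IsFiniteMeasure (volume.restrict (Ioo a b)) :=
    isFiniteMeasure_restrict.2 measure_Ioo_lt_top.ne
  have hdu_int : Integrable du (volume.restrict (Ioo a b)) := hdu.integrable one_le_two
  have hae : ∀ᵐ x ∂(volume.restrict (Ioo a b)), ⟪du x, u x⟫ =
      ⟪du x, u a⟫ + ⟪du x, ∫ t in Iio x, du t ∂(volume.restrict (Ioo a b))⟫ := by
    filter_upwards [ae_restrict_mem measurableSet_Ioo] with x hx
    rw [Measure.restrict_restrict measurableSet_Iio, Iio_inter_Ioo, min_eq_left hx.2.le,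
      ← inner_add_right, ← hftc x (Ioo_subset_Icc_self hx)]
  rw [integral_congr_ae hae, integral_add (hdu_int.inner_const _) (integrable_inner_integral_Iio hdu_int),
    integral_inner_integral_Iio hdu_int, hftc b (right_mem_Icc.2 hab), norm_add_sq_real]
  have hlin : ∫ x in Ioo a b, ⟪du x, u a⟫ = ⟪u a, ∫ x in Ioo a b, du x⟫ :=
    (integral_congr_ae (.of_forall fun x => real_inner_comm (u a) (du x))).trans
      (integral_inner hdu_int (u a))
  rw [hlin]
  ring

end PrimitiveInner

lemma dotProduct_mulVec_self_le {n : Type*} [Fintype n] [DecidableEq n] {M : Matrix n n ℝ}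
    (hM : (1 - Mᵀ * M).PosSemidef) (w : n → ℝ) : M *ᵥ w ⬝ᵥ M *ᵥ w ≤ w ⬝ᵥ w := by
  have := hM.dotProduct_mulVec_nonneg w
  rw [star_trivial, sub_mulVec, one_mulVec, dotProduct_sub, ← mulVec_mulVec, dotProduct_mulVec,
    vecMul_transpose] at this
  linarith

theorem stmt_5_general (N : ℕ)
    (S : Set ((ℝ → EuclideanSpace ℝ (Fin N)) × (ℝ → EuclideanSpace ℝ (Fin N))))
    (M : Matrix (Fin N) (Fin N) ℝ)
    (hdom : ∀ p ∈ S, IsH1Rep (-(1/2)) (1/2) p.1 p.2)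
    (hM : (1 - Mᵀ * M).PosSemidef)
    (hbc : ∀ p ∈ S, ∀ i,
      M.mulVec (fun j => p.1 (1/2) j) i + p.1 (-(1/2)) i = 0) :
    ∀ p ∈ S, 0 ≤ ∫ x in Ioo (-(1/2) : ℝ) (1/2), (inner ℝ (p.2 x) (p.1 x) : ℝ) := by
  intro p hp
  rw [(hdom p hp).integral_inner_eq (by norm_num)]
  have hbd : WithLp.ofLp (p.1 (-(1/2))) = -(M *ᵥ WithLp.ofLp (p.1 (1/2))) :=
    funext fun i => eq_neg_of_add_eq_zero_right (hbc p hp i)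
  have hcontr := dotProduct_mulVec_self_le hM (WithLp.ofLp (p.1 (1/2)))
  simp only [← real_inner_self_eq_norm_sq, EuclideanSpace.inner_eq_star_dotProduct, star_trivial,
    hbd, neg_dotProduct_neg]
  linarith

/-- let `D` be the operator `u ↦ u'` on a domain `S` (given as the graph
`{(u, u')}` of pairs of a function and its derivative) with `H¹₀ ⊆ dom D ⊆ H¹`.
If for some matrix `M` with `MᵀM ≤ 1` every `u ∈ dom D` satisfies the boundary
condition `M·u(1/2⁻) + u(-1/2⁺) = 0`, then `D` is accretive: `⟨Du, u⟩_{L²} ≥ 0`. -/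
theorem stmt_5 (N : ℕ)
    (S : Set ((ℝ → EuclideanSpace ℝ (Fin N)) × (ℝ → EuclideanSpace ℝ (Fin N))))
    (M : Matrix (Fin N) (Fin N) ℝ)
    (hdom : ∀ p ∈ S, IsH1Rep (-(1/2)) (1/2) p.1 p.2)
    (hH10 : ∀ u du : ℝ → EuclideanSpace ℝ (Fin N),
      IsH1Rep (-(1/2)) (1/2) u du → u (-(1/2)) = 0 → u (1/2) = 0 → (u, du) ∈ S)
    (hM : (1 - Mᵀ * M).PosSemidef)
    (hbc : ∀ p ∈ S, ∀ i,
      M.mulVec (fun j => p.1 (1/2) j) i + p.1 (-(1/2)) i = 0) :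
    ∀ p ∈ S, 0 ≤ ∫ x in Ioo (-(1/2) : ℝ) (1/2), (inner ℝ (p.2 x) (p.1 x) : ℝ) :=
  stmt_5_general N S M hdom hM hbc
end

section
/- Let V : L²(]a,b[; ℝᴺ) → L²(]-1/2,1/2[; ℝᴺ) be an invertible bounded operator such that V (P₁ ∂ₓ) V* = ∂ₓ, where P₁ ∈ ℝ^{N×N} is symmetric and invertible. Then there exists an invertible matrix C ∈ ℝ^{2N×2N} such that for all u ∈ H¹(]-1/2,1/2[; ℝᴺ), V*u ∈ H¹(]a,b[; ℝᴺ) and ((V*u)(b), (V*u)(a)) = C (u(1/2), u(-1/2)). Moreover C satisfies Cᵀ diag(P₁, -P₁) C = diag(1, -1). -/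
open MeasureTheory Set Matrix

/-- The graph of the operator `∂ₓ` with domain `H¹(]a,b[; ℝᴺ)` on
`L²(]a,b[; ℝᴺ)`: `(f,g)` belongs to it iff `f` has an `H¹` representative `u` with
derivative representing `g`. -/
def InGraphDeriv (N : ℕ) (a b : ℝ)
    (f g : Lp (EuclideanSpace ℝ (Fin N)) 2 (volume.restrict (Ioo a b))) : Prop :=
  ∃ u du : ℝ → EuclideanSpace ℝ (Fin N), IsH1Rep a b u du ∧
    (f : ℝ → EuclideanSpace ℝ (Fin N)) =ᵐ[volume.restrict (Ioo a b)] u ∧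
    (g : ℝ → EuclideanSpace ℝ (Fin N)) =ᵐ[volume.restrict (Ioo a b)] du

/-- The graph of the operator `P₁∂ₓ` with domain `H¹(]a,b[; ℝᴺ)`. -/
def InGraphP1Deriv (N : ℕ) (a b : ℝ) (P₁ : Matrix (Fin N) (Fin N) ℝ)
    (f g : Lp (EuclideanSpace ℝ (Fin N)) 2 (volume.restrict (Ioo a b))) : Prop :=
  ∃ u du : ℝ → EuclideanSpace ℝ (Fin N), IsH1Rep a b u du ∧
    (f : ℝ → EuclideanSpace ℝ (Fin N)) =ᵐ[volume.restrict (Ioo a b)] u ∧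
    (g : ℝ → EuclideanSpace ℝ (Fin N)) =ᵐ[volume.restrict (Ioo a b)]
      fun x => (WithLp.toLp 2 (fun i => P₁.mulVec (fun j => du x j) i) : EuclideanSpace ℝ (Fin N))

/-!
Pairing `∂ₓu` with `u'` in `L²(]-1/2,1/2[)`, transporting the pairing through `V` and integrating
by parts on both intervals gives Green's identity
`⟪w b, P₁ w' b⟫ - ⟪w a, P₁ w' a⟫ = ⟪u (1/2), u' (1/2)⟫ - ⟪u (-1/2), u' (-1/2)⟫`
for `w = V*u`, `w' = V*u'`. Read backwards through `(V⁻¹)*`, the graph identity shows that `V*`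
maps `H¹` onto `H¹`, so `w'` can have arbitrary boundary values; as `P₁` is invertible, the
boundary values of `w` vanish whenever those of `u` do. Hence the boundary values of `V*u` depend
linearly on those of `u`, through a matrix `C`, and Green's identity says exactly
`Cᵀ diag(P₁,-P₁) C = diag(1,-1)`, which also forces `C` to be invertible.
-/

open scoped RealInnerProductSpace

section H1

variable {E F : Type*} [NormedAddCommGroup E] [NormedSpace ℝ E]
  [NormedAddCommGroup F] [NormedSpace ℝ F] {a b : ℝ} {u du v dv : ℝ → E}

namespace IsH1Rep

theorem integrableOn (hu : IsH1Rep a b u du) : IntegrableOn du (Ioo a b) :=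
  hu.2.1.integrable one_le_two

theorem memLp (hu : IsH1Rep a b u du) : MemLp u 2 (volume.restrict (Ioo a b)) := by
  obtain ⟨M, hM⟩ := isCompact_Icc.exists_bound_of_continuousOn hu.1
  refine .of_bound ((hu.1.mono Ioo_subset_Icc_self).aestronglyMeasurable measurableSet_Ioo) M ?_
  filter_upwards [ae_restrict_mem measurableSet_Ioo] with x hx using hM x (Ioo_subset_Icc_self hx)

theorem add (hu : IsH1Rep a b u du) (hv : IsH1Rep a b v dv) :
    IsH1Rep a b (u + v) (du + dv) := by
  refine ⟨hu.1.add hv.1, hu.2.1.add hv.2.1, fun x hx => ?_⟩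
  have hIoo : Ioo a x ⊆ Ioo a b := Ioo_subset_Ioo_right hx.2
  simp only [Pi.add_apply]
  rw [hu.2.2 x hx, hv.2.2 x hx,
    integral_add (hu.integrableOn.mono_set hIoo) (hv.integrableOn.mono_set hIoo)]
  abel

theorem const_smul (c : ℝ) (hu : IsH1Rep a b u du) : IsH1Rep a b (c • u) (c • du) := by
  refine ⟨hu.1.const_smul c, hu.2.1.const_smul c, fun x hx => ?_⟩
  simp only [Pi.smul_apply]
  rw [hu.2.2 x hx, integral_smul, smul_add]

theorem sub (hu : IsH1Rep a b u du) (hv : IsH1Rep a b v dv) :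
    IsH1Rep a b (u - v) (du - dv) := by
  simpa only [sub_eq_add_neg, neg_one_smul] using hu.add (hv.const_smul (-1))

theorem map [CompleteSpace E] [CompleteSpace F] (L : E →L[ℝ] F) (hu : IsH1Rep a b u du) :
    IsH1Rep a b (fun x => L (u x)) (fun x => L (du x)) := by
  refine ⟨L.continuous.comp_continuousOn hu.1, L.comp_memLp' hu.2.1, fun x hx => ?_⟩
  dsimp only
  rw [hu.2.2 x hx, map_add,
    L.integral_comp_comm (hu.integrableOn.mono_set (Ioo_subset_Ioo_right hx.2))]

end IsH1Rep

theorem isH1Rep_lineMap [CompleteSpace E] (y₀ y₁ : E) :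
    IsH1Rep a b (fun x => AffineMap.lineMap y₀ y₁ ((x - a) / (b - a)))
      (fun _ => (b - a)⁻¹ • (y₁ - y₀)) := by
  refine ⟨by fun_prop, memLp_const _, fun x hx => ?_⟩
  dsimp only
  rw [setIntegral_const, Real.volume_real_Ioo_of_le hx.1, sub_self, zero_div,
    AffineMap.lineMap_apply_zero, AffineMap.lineMap_apply, smul_smul, vsub_eq_sub, vadd_eq_add,
    div_eq_mul_inv, add_comm]

theorem exists_isH1Rep_endpoints [CompleteSpace E] (hab : a ≠ b) (y₀ y₁ : E) :
    ∃ u du, IsH1Rep a b u du ∧ u a = y₀ ∧ u b = y₁ :=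
  ⟨_, _, isH1Rep_lineMap y₀ y₁, by simp, by simp [div_self (sub_ne_zero.2 hab.symm)]⟩

end H1

section IntegrationByParts

variable {a b : ℝ}

theorem IsH1Rep.exists_absolutelyContinuousOnInterval {f f' : ℝ → ℝ} (hab : a ≤ b)
    (hf : IsH1Rep a b f f') :
    ∃ F, AbsolutelyContinuousOnInterval F a b ∧ EqOn f F (Icc a b) ∧
      ∀ᵐ x ∂volume.restrict (Ioo a b), deriv F x = f' x := by
  have hint : IntervalIntegrable f' volume a b :=
    (intervalIntegrable_iff_integrableOn_Ioo_of_le hab).2 hf.integrableOn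
  refine ⟨fun x => f a + ∫ t in a..x, f' t, ?_, fun x hx => ?_, ?_⟩
  · exact (LipschitzWith.const (f a)).lipschitzOnWith.absolutelyContinuousOnInterval.add
      (hint.absolutelyContinuousOnInterval_intervalIntegral left_mem_uIcc)
  · rw [hf.2.2 x hx]
    dsimp only
    rw [intervalIntegral.integral_of_le hx.1, integral_Ioc_eq_integral_Ioo]
  · rw [ae_restrict_iff' measurableSet_Ioo]
    filter_upwards [hint.ae_hasDerivAt_integral] with x hx hxI
    have hxI' : x ∈ uIcc a b := by rw [uIcc_of_le hab]; exact Ioo_subset_Icc_self hxI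
    exact ((hx hxI' a left_mem_uIcc).const_add (f a)).deriv

theorem IsH1Rep.integral_deriv_mul_add_integral_mul_deriv {f f' g g' : ℝ → ℝ} (hab : a ≤ b)
    (hf : IsH1Rep a b f f') (hg : IsH1Rep a b g g') :
    (∫ x in Ioo a b, f' x * g x) + ∫ x in Ioo a b, f x * g' x = f b * g b - f a * g a := by
  obtain ⟨F, hF, hfF, hF'⟩ := hf.exists_absolutelyContinuousOnInterval hab
  obtain ⟨G, hG, hgG, hG'⟩ := hg.exists_absolutelyContinuousOnInterval hab
  have hIBP := hF.integral_deriv_mul_eq_sub hG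
  rw [intervalIntegral.integral_of_le hab, integral_Ioc_eq_integral_Ioo] at hIBP
  rw [hfF (left_mem_Icc.2 hab), hfF (right_mem_Icc.2 hab), hgG (left_mem_Icc.2 hab),
    hgG (right_mem_Icc.2 hab), ← hIBP,
    ← integral_add (f := fun x => f' x * g x) (g := fun x => f x * g' x)
      (hf.2.1.integrable_mul hg.memLp) (hf.memLp.integrable_mul hg.2.1)]
  refine integral_congr_ae ?_
  filter_upwards [hF', hG', ae_restrict_mem measurableSet_Ioo] with x hFx hGx hx
  rw [hFx, hGx, hfF (Ioo_subset_Icc_self hx), hgG (Ioo_subset_Icc_self hx)]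

variable {E : Type*} [NormedAddCommGroup E] [InnerProductSpace ℝ E] [FiniteDimensional ℝ E]
  {u du v dv : ℝ → E}

theorem IsH1Rep.integral_inner_deriv_add_integral_inner_deriv (hab : a ≤ b)
    (hu : IsH1Rep a b u du) (hv : IsH1Rep a b v dv) :
    (∫ x in Ioo a b, ⟪du x, v x⟫) + ∫ x in Ioo a b, ⟪u x, dv x⟫ = ⟪u b, v b⟫ - ⟪u a, v a⟫ := by
  let e := stdOrthonormalBasis ℝ E
  have hexp (x y : E) : ⟪x, y⟫ = ∑ i, ⟪e i, x⟫ * ⟪e i, y⟫ := by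
    rw [← e.sum_inner_mul_inner x y]
    exact Finset.sum_congr rfl fun i _ => by rw [real_inner_comm x]
  have hu' i := hu.map (innerSL ℝ (e i))
  have hv' i := hv.map (innerSL ℝ (e i))
  simp only [innerSL_apply_apply] at hu' hv'
  simp only [hexp (du _), hexp (u _)]
  rw [integral_finsetSum (f := fun i x => ⟪e i, du x⟫ * ⟪e i, v x⟫) _
      fun i _ => (hu' i).2.1.integrable_mul (hv' i).memLp,
    integral_finsetSum (f := fun i x => ⟪e i, u x⟫ * ⟪e i, dv x⟫) _
      fun i _ => (hu' i).memLp.integrable_mul (hv' i).2.1,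
    ← Finset.sum_add_distrib, ← Finset.sum_sub_distrib]
  exact Finset.sum_congr rfl fun i _ =>
    (hu' i).integral_deriv_mul_add_integral_mul_deriv hab (hv' i)

end IntegrationByParts

section Representatives

variable {E : Type*} [NormedAddCommGroup E] [NormedSpace ℝ E] {a b : ℝ}

def HasH1Rep (f : Lp E 2 (volume.restrict (Ioo a b))) (u : ℝ → E) : Prop :=
  ∃ du, IsH1Rep a b u du ∧ (f : ℝ → E) =ᵐ[volume.restrict (Ioo a b)] u

theorem IsH1Rep.hasH1Rep {u du : ℝ → E} (hu : IsH1Rep a b u du) :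
    HasH1Rep (hu.memLp.toLp u) u :=
  ⟨du, hu, hu.memLp.coeFn_toLp⟩

namespace HasH1Rep

variable {f g : Lp E 2 (volume.restrict (Ioo a b))} {u v : ℝ → E}

theorem eqOn (hab : a ≠ b) (hu : HasH1Rep f u) (hv : HasH1Rep f v) : EqOn u v (Icc a b) := by
  obtain ⟨_, hu, hfu⟩ := hu
  obtain ⟨_, hv, hfv⟩ := hv
  refine Measure.eqOn_Icc_of_ae_eq volume hab ?_ hu.1 hv.1
  rw [← Measure.restrict_congr_set Ioo_ae_eq_Icc]
  exact hfu.symm.trans hfv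

theorem add (hu : HasH1Rep f u) (hv : HasH1Rep g v) : HasH1Rep (f + g) (u + v) := by
  obtain ⟨du, hu, hfu⟩ := hu
  obtain ⟨dv, hv, hgv⟩ := hv
  exact ⟨du + dv, hu.add hv, (Lp.coeFn_add f g).trans (hfu.add hgv)⟩

theorem const_smul (c : ℝ) (hu : HasH1Rep f u) : HasH1Rep (c • f) (c • u) := by
  obtain ⟨du, hu, hfu⟩ := hu
  exact ⟨c • du, hu.const_smul c, (Lp.coeFn_smul c f).trans (hfu.const_smul c)⟩

theorem sub (hu : HasH1Rep f u) (hv : HasH1Rep g v) : HasH1Rep (f - g) (u - v) := by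
  obtain ⟨du, hu, hfu⟩ := hu
  obtain ⟨dv, hv, hgv⟩ := hv
  exact ⟨du - dv, hu.sub hv, (Lp.coeFn_sub f g).trans (hfu.sub hgv)⟩

end HasH1Rep

end Representatives

theorem MeasureTheory.L2.inner_eq_integral_of_ae_eq {α E : Type*} {m : MeasurableSpace α}
    {μ : Measure α} [NormedAddCommGroup E] [InnerProductSpace ℝ E] {f g : Lp E 2 μ}
    {φ ψ : α → E} (hf : f =ᵐ[μ] φ) (hg : g =ᵐ[μ] ψ) : ⟪f, g⟫ = ∫ x, ⟪φ x, ψ x⟫ ∂μ := by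
  rw [L2.inner_def]
  refine integral_congr_ae ?_
  filter_upwards [hf, hg] with x hfx hgx
  rw [hfx, hgx]

theorem exists_linearMap_of_rel {R M M₂ : Type*} [Semiring R] [AddCommMonoid M] [Module R M]
    [AddCommMonoid M₂] [Module R M₂] (r : M → M₂ → Prop) (total : ∀ x, ∃ y, r x y)
    (unique : ∀ x y y', r x y → r x y' → y = y')
    (add : ∀ x x' y y', r x y → r x' y' → r (x + x') (y + y'))
    (smul : ∀ (c : R) x y, r x y → r (c • x) (c • y)) :
    ∃ L : M →ₗ[R] M₂, ∀ x y, r x y → L x = y := by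
  choose g hg using total
  refine ⟨⟨⟨g, fun x x' => ?_⟩, fun c x => ?_⟩, fun x y hxy => unique x _ _ (hg x) hxy⟩
  · exact unique _ _ _ (hg _) (add _ _ _ _ (hg x) (hg x'))
  · exact unique _ _ _ (hg _) (smul c _ _ (hg x))

namespace Matrix

variable {n R : Type*} [Fintype n] [DecidableEq n] [CommRing R] {C D J : Matrix n n R}

theorem transpose_mul_mul_eq_of_dotProduct_mulVec
    (h : ∀ p q, C *ᵥ p ⬝ᵥ D *ᵥ (C *ᵥ q) = p ⬝ᵥ J *ᵥ q) : Cᵀ * D * C = J := by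
  refine toBilin'.injective (LinearMap.ext₂ fun p q => ?_)
  rw [toBilin'_apply', toBilin'_apply', ← h, ← mulVec_mulVec, ← mulVec_mulVec, dotProduct_mulVec,
    vecMul_transpose]

theorem isUnit_of_transpose_mul_mul_eq (h : Cᵀ * D * C = J) (hJ : IsUnit J.det) : IsUnit C := by
  rw [← h, det_mul, det_mul, det_transpose] at hJ
  exact (isUnit_iff_isUnit_det C).2 (isUnit_of_mul_isUnit_right hJ)

end Matrix

section EndpointValues

variable {ι : Type*}

def endpointVec (a b : ℝ) : (ℝ → EuclideanSpace ℝ ι) →ₗ[ℝ] ι ⊕ ι → ℝ where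
  toFun u := Sum.elim (fun i => u b i) (fun i => u a i)
  map_add' u v := by ext (i | i) <;> rfl
  map_smul' c u := by ext (i | i) <;> rfl

variable {a b : ℝ} {u v : ℝ → EuclideanSpace ℝ ι}

theorem endpointVec_eq_zero_iff : endpointVec a b u = 0 ↔ u a = 0 ∧ u b = 0 := by
  refine ⟨fun h => ⟨?_, ?_⟩, fun ⟨ha, hb⟩ => ?_⟩
  · ext i
    simpa [endpointVec] using congr_fun h (Sum.inr i)
  · ext i
    simpa [endpointVec] using congr_fun h (Sum.inl i)
  · ext (i | i) <;> simp [endpointVec, ha, hb]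

theorem exists_isH1Rep_endpointVec [Fintype ι] (hab : a ≠ b) (p : ι ⊕ ι → ℝ) :
    ∃ u du, IsH1Rep a b u du ∧ endpointVec a b u = p := by
  obtain ⟨u, du, hu, hua, hub⟩ :=
    exists_isH1Rep_endpoints hab (WithLp.toLp 2 (p ∘ Sum.inr)) (WithLp.toLp 2 (p ∘ Sum.inl))
  refine ⟨u, du, hu, ?_⟩
  ext (i | i) <;> simp [endpointVec, hua, hub]

theorem endpointVec_dotProduct_fromBlocks_mulVec [Fintype ι] [DecidableEq ι]
    (P : Matrix ι ι ℝ) :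
    endpointVec a b u ⬝ᵥ fromBlocks P 0 0 (-P) *ᵥ endpointVec a b v =
      ⟪u b, toEuclideanCLM (𝕜 := ℝ) P (v b)⟫ -
        ⟪u a, toEuclideanCLM (𝕜 := ℝ) P (v a)⟫ := by
  simp only [endpointVec, LinearMap.coe_mk, AddHom.coe_mk, fromBlocks_mulVec, Sum.elim_comp_inl,
    Sum.elim_comp_inr, zero_mulVec, add_zero, zero_sub, sumElim_dotProduct_sumElim,
    neg_mulVec, dotProduct_neg, EuclideanSpace.inner_eq_star_dotProduct, star_trivial,
    ← sub_eq_add_neg]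
  rw [dotProduct_comm _ (P *ᵥ _), dotProduct_comm _ (P *ᵥ _)]
  rfl

end EndpointValues

section Conjugation

open ContinuousLinearMap (adjoint)

variable {N : ℕ} {a b c d : ℝ} {P₁ : Matrix (Fin N) (Fin N) ℝ}
  {V : Lp (EuclideanSpace ℝ (Fin N)) 2 (volume.restrict (Ioo a b)) ≃L[ℝ]
    Lp (EuclideanSpace ℝ (Fin N)) 2 (volume.restrict (Ioo c d))}

/-- `V (P₁∂ₓ) V* = ∂ₓ`, as an equality of graphs. -/
def ConjugatesDeriv (P₁ : Matrix (Fin N) (Fin N) ℝ)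
    (V : Lp (EuclideanSpace ℝ (Fin N)) 2 (volume.restrict (Ioo a b)) ≃L[ℝ]
      Lp (EuclideanSpace ℝ (Fin N)) 2 (volume.restrict (Ioo c d))) : Prop :=
  ∀ f g, InGraphDeriv N c d f g ↔
    ∃ h, InGraphP1Deriv N a b P₁ (adjoint V.toContinuousLinearMap f) h ∧ g = V h

namespace ConjugatesDeriv

theorem exists_hasH1Rep_adjoint (hV : ConjugatesDeriv P₁ V) {f u} (hu : HasH1Rep f u) :
    ∃ w, HasH1Rep (adjoint V.toContinuousLinearMap f) w := by
  obtain ⟨du, hu, hfu⟩ := hu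
  obtain ⟨-, ⟨w, dw, hw, hw', -⟩, -⟩ :=
    (hV f (hu.2.1.toLp du)).1 ⟨u, du, hu, hfu, hu.2.1.coeFn_toLp⟩
  exact ⟨w, dw, hw, hw'⟩

theorem exists_hasH1Rep_adjoint_eq (hV : ConjugatesDeriv P₁ V) {ψ w} (hw : HasH1Rep ψ w) :
    ∃ f u, HasH1Rep f u ∧ adjoint V.toContinuousLinearMap f = ψ := by
  obtain ⟨dw, hw, hψw⟩ := hw
  have hVψ : adjoint V.toContinuousLinearMap (adjoint V.symm.toContinuousLinearMap ψ) = ψ := by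
    rw [← ContinuousLinearMap.comp_apply, ← ContinuousLinearMap.adjoint_comp,
      V.coe_symm_comp_coe, ContinuousLinearMap.adjoint_id, ContinuousLinearMap.id_apply]
  have hPdw := (toEuclideanCLM (𝕜 := ℝ) P₁).comp_memLp' hw.2.1
  obtain ⟨u, du, hu, hfu, -⟩ := (hV _ (V (hPdw.toLp _))).2
    ⟨_, ⟨w, dw, hw, hVψ ▸ hψw, hPdw.coeFn_toLp⟩, rfl⟩
  exact ⟨_, u, ⟨du, hu, hfu⟩, hVψ⟩

theorem inner_sub_inner_eq (hV : ConjugatesDeriv P₁ V) (hab : a < b) (hcd : c < d)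
    (hP : P₁.IsHermitian) {f f' u u' w w'} (hu : HasH1Rep f u) (hu' : HasH1Rep f' u')
    (hw : HasH1Rep (adjoint V.toContinuousLinearMap f) w)
    (hw' : HasH1Rep (adjoint V.toContinuousLinearMap f') w') :
    ⟪w b, toEuclideanCLM (𝕜 := ℝ) P₁ (w' b)⟫ -
        ⟪w a, toEuclideanCLM (𝕜 := ℝ) P₁ (w' a)⟫ =
      ⟪u d, u' d⟫ - ⟪u c, u' c⟫ := by
  set T := toEuclideanCLM (𝕜 := ℝ) P₁
  have hT : ∀ x y, ⟪T x, y⟫ = ⟪x, T y⟫ := isSymmetric_toEuclideanLin_iff.2 hP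
  obtain ⟨du, hu, hfu⟩ := hu
  obtain ⟨du', hu', hfu'⟩ := hu'
  obtain ⟨h, ⟨w₀, dw₀, hw₀, hAw₀, hhw₀⟩, hVh⟩ :=
    (hV f (hu.2.1.toLp du)).1 ⟨u, du, hu, hfu, hu.2.1.coeFn_toLp⟩
  obtain ⟨h', ⟨w₀', dw₀', hw₀', hAw₀', hhw₀'⟩, hVh'⟩ :=
    (hV f' (hu'.2.1.toLp du')).1 ⟨u', du', hu', hfu', hu'.2.1.coeFn_toLp⟩
  have hww₀ := hw.eqOn hab.ne ⟨dw₀, hw₀, hAw₀⟩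
  have hww₀' := hw'.eqOn hab.ne ⟨dw₀', hw₀', hAw₀'⟩
  calc ⟪w b, T (w' b)⟫ - ⟪w a, T (w' a)⟫ = ⟪w₀ b, T (w₀' b)⟫ - ⟪w₀ a, T (w₀' a)⟫ := by
        rw [hww₀ (left_mem_Icc.2 hab.le), hww₀ (right_mem_Icc.2 hab.le),
          hww₀' (left_mem_Icc.2 hab.le), hww₀' (right_mem_Icc.2 hab.le)]
    _ = (∫ x in Ioo a b, ⟪dw₀ x, T (w₀' x)⟫) + ∫ x in Ioo a b, ⟪w₀ x, T (dw₀' x)⟫ :=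
        (hw₀.integral_inner_deriv_add_integral_inner_deriv hab.le (hw₀'.map T)).symm
    _ = ⟪h, adjoint V.toContinuousLinearMap f'⟫ + ⟪adjoint V.toContinuousLinearMap f, h'⟫ := by
        rw [L2.inner_eq_integral_of_ae_eq hhw₀ hAw₀', L2.inner_eq_integral_of_ae_eq hAw₀ hhw₀']
        congr 1
        exact integral_congr_ae (ae_of_all _ fun x => (hT (dw₀ x) (w₀' x)).symm)
    _ = ⟪hu.2.1.toLp du, f'⟫ + ⟪f, hu'.2.1.toLp du'⟫ := by
        rw [ContinuousLinearMap.adjoint_inner_right, ContinuousLinearMap.adjoint_inner_left,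
          hVh, hVh']
        rfl
    _ = (∫ x in Ioo c d, ⟪du x, u' x⟫) + ∫ x in Ioo c d, ⟪u x, du' x⟫ := by
        rw [L2.inner_eq_integral_of_ae_eq hu.2.1.coeFn_toLp hfu',
          L2.inner_eq_integral_of_ae_eq hfu hu'.2.1.coeFn_toLp]
    _ = ⟪u d, u' d⟫ - ⟪u c, u' c⟫ :=
        hu.integral_inner_deriv_add_integral_inner_deriv hcd.le hu'

theorem endpointVec_eq_zero (hV : ConjugatesDeriv P₁ V) (hab : a < b) (hcd : c < d)
    (hP : P₁.IsHermitian) (hinv : IsUnit P₁.det) {f u w} (hu : HasH1Rep f u)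
    (hu₀ : endpointVec c d u = 0) (hw : HasH1Rep (adjoint V.toContinuousLinearMap f) w) :
    endpointVec a b w = 0 := by
  rw [endpointVec_eq_zero_iff] at hu₀ ⊢
  set T := toEuclideanCLM (𝕜 := ℝ) P₁
  have hT (y) : T (toEuclideanCLM (𝕜 := ℝ) P₁⁻¹ y) = y := by
    change (T * toEuclideanCLM (𝕜 := ℝ) P₁⁻¹) y = y
    rw [← map_mul, Matrix.mul_nonsing_inv _ hinv, map_one]
    rfl
  have key (y₀ y₁) : ⟪w b, T y₁⟫ - ⟪w a, T y₀⟫ = 0 := by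
    obtain ⟨ψ, dψ, hψ, hψa, hψb⟩ := exists_isH1Rep_endpoints hab.ne y₀ y₁
    obtain ⟨f', u', hu', hψ'⟩ := hV.exists_hasH1Rep_adjoint_eq hψ.hasH1Rep
    have := hV.inner_sub_inner_eq hab hcd hP hu hu' hw (hψ' ▸ hψ.hasH1Rep)
    rwa [hψa, hψb, hu₀.1, hu₀.2, inner_zero_left, inner_zero_left, sub_zero] at this
  constructor
  · have := key (toEuclideanCLM (𝕜 := ℝ) P₁⁻¹ (w a)) 0
    rw [hT, map_zero, inner_zero_right, zero_sub, neg_eq_zero] at this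
    exact inner_self_eq_zero.1 this
  · have := key 0 (toEuclideanCLM (𝕜 := ℝ) P₁⁻¹ (w b))
    rw [hT, map_zero, inner_zero_right, sub_zero] at this
    exact inner_self_eq_zero.1 this

theorem exists_hasH1Rep_endpointVec (hV : ConjugatesDeriv P₁ V) (hcd : c < d)
    (p : Fin N ⊕ Fin N → ℝ) :
    ∃ f u w, HasH1Rep f u ∧ HasH1Rep (adjoint V.toContinuousLinearMap f) w ∧
      endpointVec c d u = p := by
  obtain ⟨u, du, hu, rfl⟩ := exists_isH1Rep_endpointVec hcd.ne p
  obtain ⟨w, hw⟩ := hV.exists_hasH1Rep_adjoint hu.hasH1Rep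
  exact ⟨_, u, w, hu.hasH1Rep, hw, rfl⟩

theorem exists_linearMap_endpointVec (hV : ConjugatesDeriv P₁ V) (hab : a < b) (hcd : c < d)
    (hP : P₁.IsHermitian) (hinv : IsUnit P₁.det) :
    ∃ L : (Fin N ⊕ Fin N → ℝ) →ₗ[ℝ] Fin N ⊕ Fin N → ℝ, ∀ f u w, HasH1Rep f u →
      HasH1Rep (adjoint V.toContinuousLinearMap f) w →
        L (endpointVec c d u) = endpointVec a b w := by
  refine (exists_linearMap_of_rel (R := ℝ) (fun p q => ∃ f u w, HasH1Rep f u ∧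
      HasH1Rep (adjoint V.toContinuousLinearMap f) w ∧ endpointVec c d u = p ∧
        endpointVec a b w = q) ?total ?unique ?add ?smul).imp
    fun L hL f u w hu hw => hL _ _ ⟨f, u, w, hu, hw, rfl, rfl⟩
  case total =>
    intro p
    obtain ⟨f, u, w, hu, hw, rfl⟩ := hV.exists_hasH1Rep_endpointVec hcd p
    exact ⟨_, f, u, w, hu, hw, rfl, rfl⟩
  case unique =>
    rintro p q q' ⟨f₁, u₁, w₁, hu₁, hw₁, rfl, rfl⟩ ⟨f₂, u₂, w₂, hu₂, hw₂, hu₁₂, rfl⟩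
    have := hV.endpointVec_eq_zero hab hcd hP hinv (hu₁.sub hu₂)
      (by rw [map_sub, hu₁₂, sub_self]) (by rw [map_sub]; exact hw₁.sub hw₂)
    rwa [map_sub, sub_eq_zero] at this
  case add =>
    rintro p p' q q' ⟨f₁, u₁, w₁, hu₁, hw₁, rfl, rfl⟩ ⟨f₂, u₂, w₂, hu₂, hw₂, rfl, rfl⟩
    exact ⟨f₁ + f₂, u₁ + u₂, w₁ + w₂, hu₁.add hu₂, by rw [map_add]; exact hw₁.add hw₂,
      map_add _ _ _, map_add _ _ _⟩
  case smul =>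
    rintro t p q ⟨f, u, w, hu, hw, rfl, rfl⟩
    exact ⟨t • f, t • u, t • w, hu.const_smul t, by rw [map_smul]; exact hw.const_smul t,
      map_smul _ _ _, map_smul _ _ _⟩

theorem exists_matrix_endpointVec_eq_mulVec (hV : ConjugatesDeriv P₁ V) (hab : a < b)
    (hcd : c < d) (hP : P₁.IsHermitian) (hinv : IsUnit P₁.det) :
    ∃ C : Matrix (Fin N ⊕ Fin N) (Fin N ⊕ Fin N) ℝ,
      (∀ f u w, HasH1Rep f u → HasH1Rep (adjoint V.toContinuousLinearMap f) w →
        endpointVec a b w = C *ᵥ endpointVec c d u) ∧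
      Cᵀ * fromBlocks P₁ 0 0 (-P₁) * C = fromBlocks 1 0 0 (-1) := by
  obtain ⟨L, hL⟩ := hV.exists_linearMap_endpointVec hab hcd hP hinv
  have hC (f u w) (hu : HasH1Rep f u) (hw : HasH1Rep (adjoint V.toContinuousLinearMap f) w) :
      endpointVec a b w = LinearMap.toMatrix' L *ᵥ endpointVec c d u := by
    rw [LinearMap.toMatrix'_mulVec, hL f u w hu hw]
  refine ⟨_, hC, Matrix.transpose_mul_mul_eq_of_dotProduct_mulVec fun p q => ?_⟩
  obtain ⟨f, u, w, hu, hw, rfl⟩ := hV.exists_hasH1Rep_endpointVec hcd p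
  obtain ⟨f', u', w', hu', hw', rfl⟩ := hV.exists_hasH1Rep_endpointVec hcd q
  rw [← hC _ _ _ hu hw, ← hC _ _ _ hu' hw', endpointVec_dotProduct_fromBlocks_mulVec,
    endpointVec_dotProduct_fromBlocks_mulVec, map_one]
  exact hV.inner_sub_inner_eq hab hcd hP hu hu' hw hw'

end ConjugatesDeriv

end Conjugation

/-- if `V : L²(]a,b[;ℝᴺ) → L²(]-1/2,1/2[;ℝᴺ)` is an invertible bounded
operator with `V (P₁∂ₓ) V* = ∂ₓ` (equality of unbounded operators, i.e. of graphs),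
`P₁` symmetric invertible, then there is an invertible `C ∈ ℝ^{2N×2N}` mapping the
boundary values `(u(1/2), u(-1/2))` of `u ∈ H¹` to the boundary values
`((V*u)(b), (V*u)(a))`, and `Cᵀ diag(P₁,-P₁) C = diag(1,-1)`. -/
theorem stmt_15 (N : ℕ) (a b : ℝ) (hab : a < b) (P₁ : Matrix (Fin N) (Fin N) ℝ)
    (hsym : P₁.IsHermitian) (hinv : IsUnit P₁.det)
    (V : Lp (EuclideanSpace ℝ (Fin N)) 2 (volume.restrict (Ioo a b)) ≃L[ℝ]
         Lp (EuclideanSpace ℝ (Fin N)) 2 (volume.restrict (Ioo (-(1/2) : ℝ) (1/2))))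
    (hV : ∀ f g : Lp (EuclideanSpace ℝ (Fin N)) 2
        (volume.restrict (Ioo (-(1/2) : ℝ) (1/2))),
      InGraphDeriv N (-(1/2)) (1/2) f g ↔
        ∃ h, InGraphP1Deriv N a b P₁
            (ContinuousLinearMap.adjoint V.toContinuousLinearMap f) h ∧ g = V h) :
    ∃ C : Matrix (Fin N ⊕ Fin N) (Fin N ⊕ Fin N) ℝ, IsUnit C ∧
      (∀ (f : Lp (EuclideanSpace ℝ (Fin N)) 2
            (volume.restrict (Ioo (-(1/2) : ℝ) (1/2))))
          (u du : ℝ → EuclideanSpace ℝ (Fin N)),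
        IsH1Rep (-(1/2)) (1/2) u du →
        (f : ℝ → EuclideanSpace ℝ (Fin N)) =ᵐ[volume.restrict (Ioo (-(1/2) : ℝ) (1/2))] u →
        ∃ w dw : ℝ → EuclideanSpace ℝ (Fin N), IsH1Rep a b w dw ∧
          ((ContinuousLinearMap.adjoint V.toContinuousLinearMap f :
              Lp (EuclideanSpace ℝ (Fin N)) 2 (volume.restrict (Ioo a b))) :
            ℝ → EuclideanSpace ℝ (Fin N)) =ᵐ[volume.restrict (Ioo a b)] w ∧
          Sum.elim (fun i => w b i) (fun i => w a i) =
            C.mulVec (Sum.elim (fun i => u (1/2) i) (fun i => u (-(1/2)) i))) ∧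
      Cᵀ * Matrix.fromBlocks P₁ 0 0 (-P₁) * C = Matrix.fromBlocks 1 0 0 (-1) := by
  have hV' : ConjugatesDeriv P₁ V := hV
  obtain ⟨C, hC, hCJ⟩ := hV'.exists_matrix_endpointVec_eq_mulVec hab (by norm_num) hsym hinv
  have hJ : IsUnit (fromBlocks 1 0 0 (-1) : Matrix (Fin N ⊕ Fin N) (Fin N ⊕ Fin N) ℝ).det := by
    simp [Matrix.det_fromBlocks_zero₂₁, Matrix.det_neg]
  refine ⟨C, Matrix.isUnit_of_transpose_mul_mul_eq hCJ hJ, fun f u du hu hf => ?_, hCJ⟩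
  obtain ⟨w, dw, hw, hAw⟩ := hV'.exists_hasH1Rep_adjoint ⟨du, hu, hf⟩
  exact ⟨w, dw, hw, hAw, hC f u w ⟨du, hu, hf⟩ ⟨dw, hw, hAw⟩⟩
end

section
/- Let K = (K₁ K₂) ∈ ℝ^{N×2N} with K₁, K₂ ∈ ℝ^{N×N}. Suppose K has rank N and K₁K₁ᵀ ≤ K₂K₂ᵀ (positive semidefinite ordering). Then K₂ is invertible, and M := K₂⁻¹K₁ satisfies MMᵀ ≤ 1 and ker K = ker (M 1), where (M 1) ∈ ℝ^{N×2N} is the block matrix with blocks M and the identity. -/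
/-!
Evaluating the quadratic form of `K₂K₂ᵀ - K₁K₁ᵀ` at `v` gives `‖K₂ᵀv‖² - ‖K₁ᵀv‖² ≥ 0`, so
`K₂ᵀv = 0` forces `Kᵀv = 0`, hence `v = 0` since `K` has full row rank; thus `K₂` is invertible.
Then `1 - MMᵀ = K₂⁻¹(K₂K₂ᵀ - K₁K₁ᵀ)K₂⁻ᵀ` is a congruence of a positive semidefinite matrix, and
`(M 1) = K₂⁻¹K` has the same kernel as `K`.
-/

open Matrix

namespace Matrix

variable {m n R : Type*} [Fintype m] [Fintype n]

theorem vecMul_injective_of_rank_eq_card [Field R] {A : Matrix m n R}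
    (h : A.rank = Fintype.card m) : Function.Injective A.vecMul := by
  rw [vecMul_injective_iff, linearIndependent_iff_card_eq_finrank_span, Set.finrank,
    ← rank_eq_finrank_span_row, h]

theorem vecMul_eq_zero_of_posSemidef_sub [CommRing R] [PartialOrder R] [StarRing R]
    [StarOrderedRing R] [NoZeroDivisors R] {A : Matrix m n R} {B : Matrix m m R}
    (hle : (B * Bᴴ - A * Aᴴ).PosSemidef) {x : m → R} (hx : x ᵥ* B = 0) : x ᵥ* A = 0 := by
  have hquad := hle.dotProduct_mulVec_nonneg (star x)
  rw [sub_mulVec, dotProduct_sub, ← mulVec_mulVec, ← mulVec_mulVec, ← star_vecMul, ← star_vecMul,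
    star_star, dotProduct_mulVec, dotProduct_mulVec, hx, zero_dotProduct, zero_sub,
    neg_nonneg] at hquad
  exact dotProduct_self_star_eq_zero.mp (hquad.antisymm (dotProduct_self_star_nonneg _))

theorem isUnit_of_rank_fromCols_eq_card_of_posSemidef_sub [Field R] [PartialOrder R] [StarRing R]
    [StarOrderedRing R] [DecidableEq m] {A : Matrix m n R} {B : Matrix m m R}
    (hrank : (fromCols A B).rank = Fintype.card m) (hle : (B * Bᴴ - A * Aᴴ).PosSemidef) :
    IsUnit B := by
  rw [← vecMul_injective_iff_isUnit]
  refine (injective_iff_map_eq_zero (vecMulLinear B)).mpr fun x (hx : x ᵥ* B = 0) => ?_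
  apply vecMul_injective_of_rank_eq_card hrank
  simp only [vecMul_fromCols, zero_vecMul, vecMul_eq_zero_of_posSemidef_sub hle hx, hx,
    Sum.elim_zero_zero]

theorem one_sub_inv_mul_mul_conjTranspose_eq [CommRing R] [StarRing R] [DecidableEq m]
    {A : Matrix m n R} {B : Matrix m m R} (hB : IsUnit B) :
    1 - (B⁻¹ * A) * (B⁻¹ * A)ᴴ = B⁻¹ * (B * Bᴴ - A * Aᴴ) * B⁻¹ᴴ := by
  have hinv : B⁻¹ * B = 1 := nonsing_inv_mul B ((isUnit_iff_isUnit_det B).mp hB)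
  have hinvH : Bᴴ * B⁻¹ᴴ = 1 := by rw [← conjTranspose_mul, hinv, conjTranspose_one]
  rw [conjTranspose_mul, Matrix.mul_sub, Matrix.sub_mul]
  simp only [Matrix.mul_assoc]
  rw [hinvH, Matrix.mul_one, hinv]

theorem fromCols_inv_mul_one_mulVec_eq_zero_iff [CommRing R] [DecidableEq m] {A : Matrix m n R}
    {B : Matrix m m R} (hB : IsUnit B) (x : n ⊕ m → R) :
    fromCols (B⁻¹ * A) 1 *ᵥ x = 0 ↔ fromCols A B *ᵥ x = 0 := by
  have hB' : IsUnit B.det := (isUnit_iff_isUnit_det B).mp hB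
  rw [← nonsing_inv_mul B hB', ← mul_fromCols, ← mulVec_mulVec,
    (mulVec_injective_of_isUnit (isUnit_nonsing_inv_iff.mpr hB)).eq_iff' (mulVec_zero _)]

end Matrix

/-- if `K = (K₁ K₂) ∈ ℝ^{N×2N}` has rank `N` and `K₁K₁ᵀ ≤ K₂K₂ᵀ`,
then `K₂` is invertible, `M := K₂⁻¹K₁` satisfies `MMᵀ ≤ 1`, and
`ker K = ker (M 1)`. -/
theorem stmt_16 (N : ℕ) (K₁ K₂ : Matrix (Fin N) (Fin N) ℝ)
    (hrank : (Matrix.fromCols K₁ K₂).rank = N)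
    (hle : (K₂ * K₂ᵀ - K₁ * K₁ᵀ).PosSemidef) :
    IsUnit K₂ ∧ (1 - (K₂⁻¹ * K₁) * (K₂⁻¹ * K₁)ᵀ).PosSemidef ∧
    ∀ x : Fin N ⊕ Fin N → ℝ,
      (Matrix.fromCols K₁ K₂).mulVec x = 0 ↔
      (Matrix.fromCols (K₂⁻¹ * K₁) 1).mulVec x = 0 := by
  simp only [← conjTranspose_eq_transpose_of_trivial] at hle ⊢
  have hK₂ : IsUnit K₂ :=
    isUnit_of_rank_fromCols_eq_card_of_posSemidef_sub (by rwa [Fintype.card_fin]) hle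
  refine ⟨hK₂, ?_, fun x => (fromCols_inv_mul_one_mulVec_eq_zero_iff hK₂ x).symm⟩
  rw [one_sub_inv_mul_mul_conjTranspose_eq hK₂]
  exact hle.mul_mul_conjTranspose_same K₂⁻¹
end

section
/- Let M ∈ ℝ^{N×N} with MᵀM ≤ 1, let P₁ ∈ ℝ^{N×N} be symmetric invertible, and let C ∈ ℝ^{2N×2N} be invertible with Cᵀ diag(P₁, -P₁) C = diag(1, -1). Set W_B := (M 1) C⁻¹ ∈ ℝ^{N×2N}. Then W_B has rank N and W_B diag(-P₁⁻¹, P₁⁻¹) W_Bᵀ ≥ 0 (positive semidefinite). -/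
/-!
With `J = diag(1, -1)` we have `J² = 1`, so `Cᵀ diag(P, -P) C = J` gives
`(C J Cᵀ) diag(P, -P) = 1`. Hence `C` is invertible and `diag(-P⁻¹, P⁻¹) = C diag(-1, 1) Cᵀ`,
so that `W_B diag(-P⁻¹, P⁻¹) W_Bᵀ = (M 1) diag(-1, 1) (M 1)ᵀ = 1 - M Mᵀ`. This is positive
semidefinite because `1 - MᵀM` is: both are Schur complements of `[[1, M], [Mᵀ, 1]]`.
The rank is `N` because `W_B` has the right inverse `C (0; 1)`.
-/

open Matrix

namespace Matrix

variable {m n R : Type*} [Fintype m] [Fintype n] [DecidableEq m] [DecidableEq n]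

theorem posSemidef_one_sub_mul_conjTranspose_self_iff [CommRing R] [PartialOrder R] [StarRing R]
    [StarOrderedRing R] [NoZeroDivisors R] (A : Matrix m n R) :
    (1 - A * Aᴴ).PosSemidef ↔ (1 - Aᴴ * A).PosSemidef := by
  let : Invertible (1 : Matrix m m R) := invertibleOne
  let : Invertible (1 : Matrix n n R) := invertibleOne
  have h₁₁ := PosDef.fromBlocks₁₁ A 1 PosDef.one
  have h₂₂ := PosDef.fromBlocks₂₂ 1 A PosDef.one
  simpa only [inv_one, Matrix.mul_one] using h₂₂.symm.trans h₁₁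

omit [DecidableEq n] in
theorem rank_eq_card_height_of_mul_eq_one [CommRing R] [StrongRankCondition R]
    {A : Matrix m n R} {B : Matrix n m R} (h : A * B = 1) : A.rank = Fintype.card m :=
  le_antisymm A.rank_le_card_height <| by
    simpa only [h, rank_one] using rank_mul_le_left A B

theorem rank_fromCols_one_mul_of_mul_eq_one [CommRing R] [StrongRankCondition R]
    (A : Matrix m n R) {B C : Matrix (n ⊕ m) (n ⊕ m) R} (h : B * C = 1) :
    (fromCols A (1 : Matrix m m R) * B).rank = Fintype.card m := by
  refine rank_eq_card_height_of_mul_eq_one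
    (B := C * fromRows (0 : Matrix n m R) (1 : Matrix m m R)) ?_
  rw [Matrix.mul_assoc, ← Matrix.mul_assoc B, h, Matrix.one_mul, fromCols_mul_fromRows]
  simp

theorem inv_neg_eq_neg_inv [CommRing R] (A : Matrix n n R) : (-A)⁻¹ = -A⁻¹ := by
  by_cases hA : IsUnit A
  · exact inv_eq_left_inv <| by
      rw [neg_mul_neg, nonsing_inv_mul A ((isUnit_iff_isUnit_det A).mp hA)]
  · rw [nonsing_inv_eq_ringInverse, nonsing_inv_eq_ringInverse, Ring.inverse_non_unit A hA,
      Ring.inverse_non_unit (-A) ((IsUnit.neg_iff A).not.mpr hA), neg_zero]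

theorem inv_fromBlocks_neg [CommRing R] (P : Matrix n n R) :
    (fromBlocks P 0 0 (-P))⁻¹ = fromBlocks P⁻¹ 0 0 (-P⁻¹) := by
  rw [inv_fromBlocks_zero₂₁_of_isUnit_iff P 0 (-P) (IsUnit.neg_iff P).symm, inv_neg_eq_neg_inv]
  simp

theorem fromBlocks_one_neg_one_mul_self [CommRing R] :
    (fromBlocks 1 0 0 (-1) : Matrix (m ⊕ n) (m ⊕ n) R) * fromBlocks 1 0 0 (-1) = 1 := by
  simp [fromBlocks_multiply, ← fromBlocks_one]

section Congruence

variable [CommRing R] {C D J : Matrix n n R}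

theorem mul_mul_transpose_mul_eq_one_of_transpose_mul_mul_eq (hJ : J * J = 1)
    (h : Cᵀ * D * C = J) : C * J * Cᵀ * D = 1 := by
  have : Cᵀ * D * (C * J) = 1 := by rw [← Matrix.mul_assoc, h, hJ]
  simpa only [Matrix.mul_assoc] using mul_eq_one_comm.mp this

theorem nonsing_inv_mul_of_transpose_mul_mul_eq (hJ : J * J = 1) (h : Cᵀ * D * C = J) :
    C⁻¹ * C = 1 :=
  nonsing_inv_mul C <| isUnit_det_of_right_inverse (B := J * Cᵀ * D) <| by
    simpa only [Matrix.mul_assoc] using mul_mul_transpose_mul_eq_one_of_transpose_mul_mul_eq hJ h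

theorem mul_mul_mul_transpose_cancel {l : Type*} (F : Matrix l n R) {B : Matrix n n R}
    (K : Matrix n n R) (h : B * C = 1) : F * B * (C * K * Cᵀ) * (F * B)ᵀ = F * K * Fᵀ :=
  calc _ = F * (B * C) * K * (B * C)ᵀ * Fᵀ := by simp only [transpose_mul, Matrix.mul_assoc]
    _ = F * K * Fᵀ := by rw [h, transpose_one, Matrix.mul_one, Matrix.mul_one]

end Congruence

theorem fromBlocks_neg_inv_eq_mul_mul_transpose [CommRing R] {P : Matrix n n R}
    {C : Matrix (n ⊕ n) (n ⊕ n) R}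
    (h : Cᵀ * fromBlocks P 0 0 (-P) * C = fromBlocks 1 0 0 (-1)) :
    fromBlocks (-P⁻¹) 0 0 P⁻¹ = C * fromBlocks (-1) 0 0 1 * Cᵀ := by
  have hinv := inv_eq_left_inv <|
    mul_mul_transpose_mul_eq_one_of_transpose_mul_mul_eq fromBlocks_one_neg_one_mul_self h
  rw [inv_fromBlocks_neg] at hinv
  calc fromBlocks (-P⁻¹) 0 0 P⁻¹ = -fromBlocks P⁻¹ 0 0 (-P⁻¹) := by simp [fromBlocks_neg]
    _ = C * fromBlocks (-1) 0 0 1 * Cᵀ := by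
      rw [hinv, ← Matrix.neg_mul, ← Matrix.mul_neg, fromBlocks_neg]
      simp

omit [Fintype m] [DecidableEq m] in
theorem fromCols_mul_fromBlocks_mul_transpose {l : Type*} [Fintype l] [DecidableEq l]
    [CommRing R] (A : Matrix m n R) (B : Matrix m l R) :
    fromCols A B * (fromBlocks (-1) 0 0 1 : Matrix (n ⊕ l) (n ⊕ l) R) * (fromCols A B)ᵀ =
      B * Bᵀ - A * Aᵀ := by
  rw [fromCols_mul_fromBlocks, transpose_fromCols, fromCols_mul_fromRows]
  simp only [Matrix.mul_zero, Matrix.mul_one, Matrix.mul_neg, add_zero, zero_add,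
    Matrix.neg_mul]
  abel

end Matrix

theorem stmt_19_general (N : ℕ) (M P : Matrix (Fin N) (Fin N) ℝ)
    (hM : (1 - Mᵀ * M).PosSemidef)
    (C : Matrix (Fin N ⊕ Fin N) (Fin N ⊕ Fin N) ℝ)
    (hCeq : Cᵀ * Matrix.fromBlocks P 0 0 (-P) * C = Matrix.fromBlocks 1 0 0 (-1)) :
    (Matrix.fromCols M (1 : Matrix (Fin N) (Fin N) ℝ) * C⁻¹).rank = N ∧
    ((Matrix.fromCols M (1 : Matrix (Fin N) (Fin N) ℝ) * C⁻¹) * Matrix.fromBlocks (-P⁻¹) 0 0 P⁻¹ *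
      (Matrix.fromCols M (1 : Matrix (Fin N) (Fin N) ℝ) * C⁻¹)ᵀ).PosSemidef := by
  have hC : C⁻¹ * C = 1 :=
    nonsing_inv_mul_of_transpose_mul_mul_eq fromBlocks_one_neg_one_mul_self hCeq
  constructor
  · simpa using rank_fromCols_one_mul_of_mul_eq_one M hC
  · have hW : fromCols M (1 : Matrix (Fin N) (Fin N) ℝ) * C⁻¹ * fromBlocks (-P⁻¹) 0 0 P⁻¹ *
        (fromCols M (1 : Matrix (Fin N) (Fin N) ℝ) * C⁻¹)ᵀ = 1 - M * Mᵀ := by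
      rw [fromBlocks_neg_inv_eq_mul_mul_transpose hCeq, mul_mul_mul_transpose_cancel _ _ hC,
        fromCols_mul_fromBlocks_mul_transpose, transpose_one, Matrix.mul_one]
    rw [hW]
    simpa using (posSemidef_one_sub_mul_conjTranspose_self_iff M).mpr (by simpa using hM)

/-- for `M` with `MᵀM ≤ 1`, `P` symmetric invertible, and `C`
invertible with `Cᵀ diag(P,-P) C = diag(1,-1)`, the matrix `W_B := (M 1) C⁻¹` has
rank `N` and satisfies `W_B diag(-P⁻¹, P⁻¹) W_Bᵀ ≥ 0`. -/
theorem stmt_19 (N : ℕ) (M P : Matrix (Fin N) (Fin N) ℝ)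
    (hM : (1 - Mᵀ * M).PosSemidef) (hP : P.IsHermitian) (hPinv : IsUnit P.det)
    (C : Matrix (Fin N ⊕ Fin N) (Fin N ⊕ Fin N) ℝ) (hC : IsUnit C)
    (hCeq : Cᵀ * Matrix.fromBlocks P 0 0 (-P) * C = Matrix.fromBlocks 1 0 0 (-1)) :
    (Matrix.fromCols M (1 : Matrix (Fin N) (Fin N) ℝ) * C⁻¹).rank = N ∧
    ((Matrix.fromCols M (1 : Matrix (Fin N) (Fin N) ℝ) * C⁻¹) * Matrix.fromBlocks (-P⁻¹) 0 0 P⁻¹ *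
      (Matrix.fromCols M (1 : Matrix (Fin N) (Fin N) ℝ) * C⁻¹)ᵀ).PosSemidef :=
  stmt_19_general N M P hM C hCeq
end
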